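/- arXiv:math/9908159 — 3 statements merged into one kernel-verified Lean document; each statement's English description precedes it below -/
import Mathlib

section
/- Let λ = ℵ_ω and κ = (2^{ℵ₀})⁺, and assume κ < λ and 2^λ = λ^{ℵ₀}. Then there exists a stationary subset S of [λ]^{<κ} such that every unbounded subset of S is stationary. -/
open Cardinal Set

noncomputable section

/-- A finitary function on the ordinals: an arity `n` together with an
`n`-ary function on ordinals. -/
abbrev FinFun := Σ n : ℕ, (Fin n → Ordinal.{0}) → Ordinal.{0}

/-- `[λ]^{<κ}`: the collection of subsets of `λ` (viewed as the set of
ordinals `< λ`) of cardinality `< κ`. -/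
def smallSubsets (lam kap : Cardinal.{0}) : Set (Set Ordinal.{0}) :=
  {a | (∀ x ∈ a, x < lam.ord) ∧ Cardinal.mk ↥a < Cardinal.lift.{1} kap}

/-- The countable family `F` consists of finitary functions *on `λ`*. -/
def FamOn (lam : Cardinal.{0}) (F : Set FinFun) : Prop :=
  ∀ f ∈ F, ∀ x : Fin f.1 → Ordinal.{0}, (∀ i, x i < lam.ord) → f.2 x < lam.ord

/-- The club `C_F` of `[λ]^{<κ}` associated to a family `F` of finitary
functions on `λ`: the members `a` of `[λ]^{<κ}` closed under every function
of `F` and such that `a ∩ κ` is an ordinal (an initial segment of `κ`). -/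
def clubOf (lam kap : Cardinal.{0}) (F : Set FinFun) : Set (Set Ordinal.{0}) :=
  {a | a ∈ smallSubsets lam kap ∧
    (∀ f ∈ F, ∀ x : Fin f.1 → Ordinal.{0}, (∀ i, x i ∈ a) → f.2 x ∈ a) ∧
    ∃ β < kap.ord, a ∩ Set.Iio kap.ord = Set.Iio β}

/-- `C` is a club of `[λ]^{<κ}`. -/
def IsClubPk (lam kap : Cardinal.{0}) (C : Set (Set Ordinal.{0})) : Prop :=
  ∃ F : Set FinFun, F.Countable ∧ FamOn lam F ∧ C = clubOf lam kap F

/-- `S` is a stationary subset of `[λ]^{<κ}`: it meets every club. -/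
def IsStationaryPk (lam kap : Cardinal.{0}) (S : Set (Set Ordinal.{0})) : Prop :=
  ∀ C, IsClubPk lam kap C → (S ∩ C).Nonempty

/-- `S` is an unbounded subset of `[λ]^{<κ}`: every member of `[λ]^{<κ}`
is contained in some member of `S`. -/
def IsUnbounded (lam kap : Cardinal.{0}) (S : Set (Set Ordinal.{0})) : Prop :=
  ∀ b ∈ smallSubsets lam kap, ∃ a ∈ S, b ⊆ a

/-- The club filter `E_{λ,κ}`: the filter generated by the clubs of
`[λ]^{<κ}`. -/
def clubFilter (lam kap : Cardinal.{0}) : Filter (Set Ordinal.{0}) :=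
  Filter.generate {C | IsClubPk lam kap C}

/-!
Since `2 ^ λ = λ ^ ℵ₀`, there is a surjection `ψ` from the `ω`-sequences in `λ` onto the
finitary functions on `λ`. Let `S` consist of the `a ∈ [λ]^{<κ}` such that `a ∩ κ` is downward
closed and `a` is closed under `ψ e` for every `e ∈ a^ω`. Closing any `b ∈ [λ]^{<κ}` off in
`ω₁` steps shows that `S` is unbounded; `(2 ^ ℵ₀) ^ ℵ₀ = 2 ^ ℵ₀` keeps the closure of size
`< κ`. Given a club `C_F`, choose codes `e_f` with `ψ e_f = f` for the countably many `f ∈ F`: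
every `a ∈ S` containing their ranges is closed under `F`, hence lies in `C_F`. So every
unbounded subset of `S` meets every club.
-/

open Function
open scoped Ordinal

universe u v

abbrev FinOp (α : Type u) : Type u := Σ n : ℕ, (Fin n → α) → α

theorem mk_finOp_le {α : Type u} [Infinite α] : #(FinOp α) ≤ 2 ^ #α := by
  have hα : ℵ₀ ≤ #α := infinite_iff.mp ‹_›
  have hops : ∀ n : ℕ, #((Fin n → α) → α) ≤ 2 ^ #α := fun n => by
    rw [← power_self_eq hα, ← power_def]
    refine power_le_power_left (mk_ne_zero α) ?_
    rw [mk_arrow, mk_fin, lift_uzero, lift_natCast]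
    exact power_nat_le hα
  calc #(FinOp α) = sum fun n : ℕ => #((Fin n → α) → α) := mk_sigma _
    _ ≤ sum fun _ : ℕ => (2 : Cardinal.{u}) ^ #α := sum_le_sum _ _ hops
    _ = 2 ^ #α := by
      rw [sum_const, mk_nat, lift_aleph0, lift_uzero]
      exact aleph0_mul_eq (hα.trans (cantor _).le)

theorem exists_surjective_seq_finOp {α : Type u} [Infinite α] (h : 2 ^ #α = #α ^ ℵ₀) :
    ∃ ψ : (ℕ → α) → FinOp α, Surjective ψ := by
  have hle : #(FinOp α) ≤ #(ℕ → α) := by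
    rw [mk_arrow, mk_nat, lift_aleph0, lift_uzero, ← h]
    exact mk_finOp_le
  obtain ⟨e⟩ := hle
  have : Nonempty (FinOp α) := ⟨⟨0, fun _ => Classical.arbitrary α⟩⟩
  exact ⟨invFun e, invFun_surjective e.injective⟩

section TransfiniteIter

variable {α : Type u} (Φ : Set α → Set α) (b : Set α)

def transfiniteIter : Ordinal.{v} → Set α :=
  Ordinal.lt_wf.fix fun ξ T => b ∪ ⋃ η : Iio ξ, Φ (T η.1 η.2)

variable {Φ b}

theorem transfiniteIter_eq (ξ : Ordinal.{v}) :
    transfiniteIter Φ b ξ = b ∪ ⋃ η : Iio ξ, Φ (transfiniteIter Φ b η.1) :=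
  Ordinal.lt_wf.fix_eq _ ξ

theorem subset_transfiniteIter (ξ : Ordinal.{v}) : b ⊆ transfiniteIter Φ b ξ := by
  rw [transfiniteIter_eq]
  exact subset_union_left

theorem image_transfiniteIter_subset {η ξ : Ordinal.{v}} (h : η < ξ) :
    Φ (transfiniteIter Φ b η) ⊆ transfiniteIter Φ b ξ := by
  rw [transfiniteIter_eq ξ]
  exact fun x hx => Or.inr (mem_iUnion.mpr ⟨⟨η, h⟩, hx⟩)

theorem transfiniteIter_mono : Monotone (transfiniteIter.{u, v} Φ b) := by
  intro η ξ h
  rw [transfiniteIter_eq η]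
  exact union_subset (subset_transfiniteIter ξ) (iUnion_subset fun γ =>
    image_transfiniteIter_subset (γ.2.trans_le h))

theorem transfiniteIter_subset {s : Set α} (hb : b ⊆ s) (hΦ : ∀ A ⊆ s, Φ A ⊆ s)
    (ξ : Ordinal.{v}) : transfiniteIter Φ b ξ ⊆ s := by
  induction ξ using WellFoundedLT.induction with
  | _ ξ IH =>
    rw [transfiniteIter_eq]
    exact union_subset hb (iUnion_subset fun η => hΦ _ (IH η.1 η.2))

theorem mk_transfiniteIter_le {μ : Cardinal.{u}} (hμ : ℵ₀ ≤ μ) (hb : #b ≤ μ)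
    (hΦ : ∀ A : Set α, #A ≤ μ → #(Φ A) ≤ μ) {ξ : Ordinal.{v}}
    (hξ : lift.{u} ξ.card ≤ lift.{v} μ) : #(transfiniteIter Φ b ξ) ≤ μ := by
  induction ξ using WellFoundedLT.induction with
  | _ ξ IH =>
    have hι : lift.{u} #(Iio ξ) ≤ lift.{v + 1} μ := by
      rw [Cardinal.mk_Iio_ordinal, lift_lift]
      simpa using lift_le.{v + 1}.2 hξ
    have hsup : ⨆ η : Iio ξ, lift.{v + 1} #(Φ (transfiniteIter Φ b η.1)) ≤ lift.{v + 1} μ :=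
      ciSup_le' fun η => lift_le.2 <| hΦ _ <|
        IH η.1 η.2 ((lift_le.2 (Ordinal.card_le_card η.2.le)).trans hξ)
    have hU : lift.{v + 1} #(⋃ η : Iio ξ, Φ (transfiniteIter Φ b η.1)) ≤ lift.{v + 1} μ :=
      (mk_iUnion_le_lift _).trans <|
        (mul_le_mul' hι hsup).trans_eq (mul_eq_self (aleph0_le_lift.2 hμ))
    rw [transfiniteIter_eq]
    exact (mk_union_le _ _).trans ((add_le_add hb (lift_le.mp hU)).trans_eq (add_eq_self hμ))

theorem exists_lt_mem_transfiniteIter {ξ : Ordinal.{v}} (hξ : Order.IsSuccLimit ξ) {x : α}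
    (hx : x ∈ transfiniteIter Φ b ξ) : ∃ η < ξ, x ∈ transfiniteIter Φ b η := by
  rw [transfiniteIter_eq] at hx
  obtain hx | hx := hx
  · exact ⟨0, hξ.bot_lt, subset_transfiniteIter 0 hx⟩
  · obtain ⟨η, hx⟩ := mem_iUnion.mp hx
    exact ⟨Order.succ η.1, hξ.succ_lt η.2, image_transfiniteIter_subset (Order.lt_succ η.1) hx⟩

theorem exists_lt_omega_one_subset_transfiniteIter {s : Set α} (hs : s.Countable)
    (hsub : s ⊆ transfiniteIter Φ b (ω₁ : Ordinal.{v})) :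
    ∃ η < (ω₁ : Ordinal.{v}), s ⊆ transfiniteIter Φ b η := by
  have := hs.to_subtype
  choose f hf hmem using fun x : s =>
    exists_lt_mem_transfiniteIter (isSuccLimit_omega.{v} 1) (hsub x.2)
  exact ⟨iSup f, Ordinal.iSup_lt_omega_one hf, fun x hx =>
    transfiniteIter_mono (Ordinal.le_iSup f ⟨x, hx⟩) (hmem ⟨x, hx⟩)⟩

theorem image_transfiniteIter_omega_one_subset (hΦ : Monotone Φ)
    (hcount : ∀ A, ∀ y ∈ Φ A, ∃ s ⊆ A, s.Countable ∧ y ∈ Φ s) :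
    Φ (transfiniteIter Φ b (ω₁ : Ordinal.{v})) ⊆ transfiniteIter Φ b (ω₁ : Ordinal.{v}) := by
  intro y hy
  obtain ⟨s, hsA, hs, hys⟩ := hcount _ y hy
  obtain ⟨η, hη, hsη⟩ := exists_lt_omega_one_subset_transfiniteIter hs hsA
  exact image_transfiniteIter_subset hη (hΦ hsη hys)

end TransfiniteIter

theorem exists_lt_ord_inter_Iio_eq_Iio {κ : Cardinal.{u}} {a : Set Ordinal.{u}}
    (ha : #a < lift.{u + 1} κ) (hlow : ∀ x ∈ a, x < κ.ord → ∀ y < x, y ∈ a) :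
    ∃ β < κ.ord, a ∩ Iio κ.ord = Iio β := by
  have hlower : IsLowerSet (a ∩ Iio κ.ord) := fun x y hyx ⟨hxa, hxκ⟩ =>
    ⟨(eq_or_lt_of_le hyx).elim (· ▸ hxa) (hlow x hxa hxκ y), hyx.trans_lt hxκ⟩
  obtain hU | ⟨β, hβ⟩ := hlower.eq_univ_or_Iio
  · exact (lt_irrefl κ.ord (hU ▸ mem_univ κ.ord : κ.ord ∈ a ∩ Iio κ.ord).2).elim
  refine ⟨β, lt_of_le_of_ne ?_ fun hβκ => ?_, hβ⟩
  · exact Iio_subset_Iio_iff.mp (hβ ▸ inter_subset_right)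
  · have : #(a ∩ Iio κ.ord : Set Ordinal.{u}) = lift.{u + 1} κ := by
      rw [hβ, hβκ, Cardinal.mk_Iio_ordinal, card_ord]
    exact ha.not_ge (this ▸ mk_le_mk_of_subset inter_subset_left)

section ClosedSmallSubsets

variable {lam kap : Cardinal.{0}} {ψ : (ℕ → Iio lam.ord) → FinOp (Iio lam.ord)}

def seqImage (ψ : (ℕ → Iio lam.ord) → FinOp (Iio lam.ord)) (A : Set Ordinal.{0}) :
    Set Ordinal.{0} :=
  {y | ∃ e : ℕ → Iio lam.ord, (∀ n, (e n : Ordinal) ∈ A) ∧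
    ∃ x : Fin (ψ e).1 → Iio lam.ord, (∀ i, (x i : Ordinal) ∈ A) ∧ ((ψ e).2 x : Ordinal) = y}

def closureStep (kap : Cardinal.{0}) (ψ : (ℕ → Iio lam.ord) → FinOp (Iio lam.ord))
    (A : Set Ordinal.{0}) : Set Ordinal.{0} :=
  seqImage ψ A ∪ ⋃ x ∈ A ∩ Iio kap.ord, Iio x

def closedSmallSubsets (lam kap : Cardinal.{0}) (ψ : (ℕ → Iio lam.ord) → FinOp (Iio lam.ord)) :
    Set (Set Ordinal.{0}) :=
  {a | a ∈ smallSubsets lam kap ∧ closureStep kap ψ a ⊆ a}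

theorem closureStep_mono : Monotone (closureStep kap ψ) := by
  rintro A B hAB y (⟨e, he, x, hx, rfl⟩ | hy)
  · exact Or.inl ⟨e, fun n => hAB (he n), x, fun i => hAB (hx i), rfl⟩
  · obtain ⟨z, hz, hyz⟩ := mem_iUnion₂.mp hy
    exact Or.inr (mem_iUnion₂.mpr ⟨z, ⟨hAB hz.1, hz.2⟩, hyz⟩)

theorem exists_countable_of_mem_closureStep {A : Set Ordinal.{0}} {y : Ordinal.{0}}
    (hy : y ∈ closureStep kap ψ A) : ∃ s ⊆ A, s.Countable ∧ y ∈ closureStep kap ψ s := by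
  obtain ⟨e, he, x, hx, rfl⟩ | hy := hy
  · refine ⟨range (fun n => (e n : Ordinal)) ∪ range (fun i => (x i : Ordinal)), ?_, ?_, ?_⟩
    · exact union_subset (range_subset_iff.2 he) (range_subset_iff.2 hx)
    · exact (countable_range _).union (countable_range _)
    · exact Or.inl ⟨e, fun n => Or.inl ⟨n, rfl⟩, x, fun i => Or.inr ⟨i, rfl⟩, rfl⟩
  · obtain ⟨z, hz, hyz⟩ := mem_iUnion₂.mp hy
    exact ⟨{z}, singleton_subset_iff.2 hz.1, countable_singleton z,
      Or.inr (mem_iUnion₂.mpr ⟨z, ⟨rfl, hz.2⟩, hyz⟩)⟩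

theorem closureStep_subset_Iio (hkl : kap ≤ lam) (A : Set Ordinal.{0}) :
    closureStep kap ψ A ⊆ Iio lam.ord := by
  rintro y (⟨e, -, x, -, rfl⟩ | hy)
  · exact ((ψ e).2 x).2
  · obtain ⟨z, hz, hyz⟩ := mem_iUnion₂.mp hy
    exact (hyz.trans hz.2).trans_le (ord_le_ord.2 hkl)

theorem mk_subtype_forall_coe_mem_le (ι : Type) (o : Ordinal.{0}) (A : Set Ordinal.{0}) :
    #{e : ι → Iio o // ∀ i, (e i : Ordinal) ∈ A} ≤ #A ^ lift.{1} #ι := by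
  have hinj : Injective fun e : {e : ι → Iio o // ∀ i, (e i : Ordinal) ∈ A} =>
      fun i => (⟨e.1 i, e.2 i⟩ : A) := fun e e' h =>
    Subtype.ext <| funext fun i => Subtype.ext <| by simpa using congrArg Subtype.val (congrFun h i)
  exact (mk_le_of_injective hinj).trans_eq (by rw [mk_arrow, lift_uzero])

theorem mk_seqImage_le {μ : Cardinal.{0}} (hμ : ℵ₀ ≤ μ) (hμω : μ ^ ℵ₀ = μ)
    {A : Set Ordinal.{0}} (hA : #A ≤ lift.{1} μ) : #(seqImage ψ A) ≤ lift.{1} μ := by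
  have hμ' : ℵ₀ ≤ lift.{1} μ := aleph0_le_lift.2 hμ
  let Seqs := {e : ℕ → Iio lam.ord // ∀ n, (e n : Ordinal) ∈ A}
  let Args := fun e : Seqs => {x : Fin (ψ e.1).1 → Iio lam.ord // ∀ i, (x i : Ordinal) ∈ A}
  have hseqs : #Seqs ≤ lift.{1} μ := by
    refine (mk_subtype_forall_coe_mem_le ℕ _ A).trans ?_
    calc #A ^ lift.{1} #ℕ ≤ lift.{1} μ ^ lift.{1, 0} ℵ₀ := by
          rw [mk_nat]; exact power_le_power_right hA
      _ = lift.{1} μ := by rw [← lift_power, hμω]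
  have hargs : ∀ e, #(Args e) ≤ lift.{1} μ := fun e => by
    refine (mk_subtype_forall_coe_mem_le _ _ A).trans ?_
    rw [mk_fin, lift_natCast]
    exact (power_le_power_right hA).trans (power_nat_le hμ')
  have hsub : seqImage ψ A ⊆ range fun p : Σ e, Args e => ((ψ p.1.1).2 p.2.1 : Ordinal) := by
    rintro y ⟨e, he, x, hx, rfl⟩
    exact ⟨⟨⟨e, he⟩, ⟨x, hx⟩⟩, rfl⟩
  calc #(seqImage ψ A) ≤ #(Σ e, Args e) := (mk_le_mk_of_subset hsub).trans mk_range_le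
    _ = sum fun e => #(Args e) := mk_sigma _
    _ ≤ #Seqs * lift.{1} μ := (sum_le_sum _ _ hargs).trans_eq (sum_const' _ _)
    _ ≤ lift.{1} μ := (mul_le_mul' hseqs le_rfl).trans_eq (mul_eq_self hμ')

theorem mk_closureStep_le {μ : Cardinal.{0}} (hμ : ℵ₀ ≤ μ) (hμω : μ ^ ℵ₀ = μ)
    (hkap : kap = Order.succ μ) {A : Set Ordinal.{0}} (hA : #A ≤ lift.{1} μ) :
    #(closureStep kap ψ A) ≤ lift.{1} μ := by
  have hμ' : ℵ₀ ≤ lift.{1} μ := aleph0_le_lift.2 hμ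
  have hIio : ∀ x ∈ A ∩ Iio kap.ord, #(Iio x) ≤ lift.{1} μ := fun x hx => by
    have hx' : x < kap.ord := hx.2
    rw [Cardinal.mk_Iio_ordinal, lift_le, ← Order.lt_succ_iff, ← hkap, ← lt_ord]
    exact hx'
  have hsup : ⨆ x : ↥(A ∩ Iio kap.ord), #(Iio x.1) ≤ lift.{1} μ :=
    ciSup_le' fun x => hIio x.1 x.2
  have hdown : #(⋃ x ∈ A ∩ Iio kap.ord, Iio x) ≤ lift.{1} μ :=
    (mk_biUnion_le _ _).trans <| (mul_le_mul' ((mk_le_mk_of_subset inter_subset_left).trans hA)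
      hsup).trans_eq (mul_eq_self hμ')
  exact (mk_union_le _ _).trans <|
    (add_le_add (mk_seqImage_le hμ hμω hA) hdown).trans_eq (add_eq_self hμ')

theorem aleph_one_le_of_power_aleph0_eq {μ : Cardinal.{u}} (hμ : ℵ₀ ≤ μ) (hμω : μ ^ ℵ₀ = μ) :
    ℵ₁ ≤ μ :=
  calc ℵ₁ ≤ 2 ^ ℵ₀ := aleph_one_le_continuum
    _ ≤ μ ^ ℵ₀ := power_le_power_right ((natCast_lt_aleph0 (n := 2)).le.trans hμ)
    _ = μ := hμω

theorem isUnbounded_closedSmallSubsets {μ : Cardinal.{0}} (hμ : ℵ₀ ≤ μ) (hμω : μ ^ ℵ₀ = μ)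
    (hkap : kap = Order.succ μ) (hkl : kap ≤ lam) :
    IsUnbounded lam kap (closedSmallSubsets lam kap ψ) := by
  rintro b ⟨hb, hbκ⟩
  have hbμ : #b ≤ lift.{1} μ := by rwa [hkap, lift_succ, Order.lt_succ_iff] at hbκ
  have hω₁ : lift.{1} (ω₁ : Ordinal.{0}).card ≤ lift.{0} (lift.{1} μ) := by
    rw [← ord_aleph, card_ord, lift_uzero, lift_le]
    exact aleph_one_le_of_power_aleph0_eq hμ hμω
  set a := transfiniteIter (closureStep kap ψ) b (ω₁ : Ordinal.{0})
  have hsmall : #a ≤ lift.{1} μ :=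
    mk_transfiniteIter_le (aleph0_le_lift.2 hμ) hbμ (fun A => mk_closureStep_le hμ hμω hkap) hω₁
  have hbounded : a ⊆ Iio lam.ord :=
    transfiniteIter_subset hb (fun A _ => closureStep_subset_Iio hkl A) _
  have hclosed : closureStep kap ψ a ⊆ a :=
    image_transfiniteIter_omega_one_subset closureStep_mono
      fun A y hy => exists_countable_of_mem_closureStep hy
  refine ⟨a, ⟨⟨hbounded, hsmall.trans_lt ?_⟩, hclosed⟩, subset_transfiniteIter _⟩
  exact hkap ▸ lift_lt.2 (Order.lt_succ μ)

theorem exists_forall_closedSmallSubsets_mem_of_isClubPk (hψ : Surjective ψ) (hκ : ℵ₀ < kap)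
    {C : Set (Set Ordinal.{0})} (hC : IsClubPk lam kap C) :
    ∃ b ∈ smallSubsets lam kap, ∀ a ∈ closedSmallSubsets lam kap ψ, b ⊆ a → a ∈ C := by
  obtain ⟨F, hF, hFam, rfl⟩ := hC
  choose d hd using fun f : F =>
    hψ ⟨f.1.1, fun x => ⟨f.1.2 fun i => x i, hFam f.1 f.2 _ fun i => (x i).2⟩⟩
  have := hF.to_subtype
  refine ⟨⋃ f : F, range fun n => (d f n : Ordinal), ⟨?_, ?_⟩, ?_⟩
  · simp only [mem_iUnion, mem_range]
    rintro _ ⟨f, n, rfl⟩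
    exact (d f n).2
  · refine (mk_le_aleph0_iff.2 (countable_iUnion fun f => countable_range _).to_subtype).trans_lt ?_
    exact lift_aleph0.{1, 0} ▸ lift_lt.2 hκ
  · rintro a ⟨ha, hstep⟩ hda
    refine ⟨ha, fun f hf x hx => ?_, exists_lt_ord_inter_Iio_eq_Iio ha.2
      fun x hxa hxκ y hyx => hstep (Or.inr (mem_iUnion₂.mpr ⟨x, ⟨hxa, hxκ⟩, hyx⟩))⟩
    have hseq : ∀ e : ℕ → Iio lam.ord, (∀ n, (e n : Ordinal) ∈ a) →
        ∀ x : Fin (ψ e).1 → Iio lam.ord, (∀ i, (x i : Ordinal) ∈ a) → ((ψ e).2 x : Ordinal) ∈ a :=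
      fun e he x hx => hstep (Or.inl ⟨e, he, x, hx, rfl⟩)
    have h := hseq (d ⟨f, hf⟩) fun n => hda (mem_iUnion_of_mem ⟨f, hf⟩ (mem_range_self n))
    rw [hd ⟨f, hf⟩] at h
    exact h (fun i => ⟨x i, ha.1 _ (hx i)⟩) hx

end ClosedSmallSubsets

theorem isStationaryPk_of_isUnbounded {lam kap : Cardinal.{0}} {S T : Set (Set Ordinal.{0})}
    (hS : ∀ C, IsClubPk lam kap C → ∃ b ∈ smallSubsets lam kap, ∀ a ∈ S, b ⊆ a → a ∈ C)
    (hTS : T ⊆ S) (hT : IsUnbounded lam kap T) : IsStationaryPk lam kap T := by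
  intro C hC
  obtain ⟨b, hb, hbC⟩ := hS C hC
  obtain ⟨a, haT, hba⟩ := hT b hb
  exact ⟨a, haT, hbC a (hTS haT) hba⟩

theorem exists_stationary_all_unbounded_subsets_stationary_alephOmega_general
    (lam kap : Cardinal.{0})
    (hkap : kap = Order.succ (2 ^ ℵ₀))
    (hkl : kap < lam)
    (harith : 2 ^ lam = lam ^ ℵ₀) :
    ∃ S ⊆ smallSubsets lam kap, IsStationaryPk lam kap S ∧
      ∀ T ⊆ S, IsUnbounded lam kap T → IsStationaryPk lam kap T := by
  have hμ : ℵ₀ ≤ (2 ^ ℵ₀ : Cardinal.{0}) := (cantor ℵ₀).le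
  have hμω : (2 ^ ℵ₀ : Cardinal.{0}) ^ ℵ₀ = 2 ^ ℵ₀ := by rw [← power_mul, aleph0_mul_aleph0]
  have hκ : ℵ₀ < kap := hkap ▸ hμ.trans_lt (Order.lt_succ _)
  have hmk : #(Iio lam.ord) = lift.{1} lam := by rw [Cardinal.mk_Iio_ordinal, card_ord]
  have : Infinite (Iio lam.ord) := infinite_iff.2 (hmk ▸ aleph0_le_lift.2 (hκ.trans hkl).le)
  obtain ⟨ψ, hψ⟩ := exists_surjective_seq_finOp (α := Iio lam.ord) (by
    rw [hmk, ← lift_two_power, harith, lift_power, lift_aleph0])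
  have hclub := fun C => exists_forall_closedSmallSubsets_mem_of_isClubPk (C := C) hψ hκ
  refine ⟨closedSmallSubsets lam kap ψ, fun a ha => ha.1, ?_, fun T hTS hT => ?_⟩
  · exact isStationaryPk_of_isUnbounded hclub subset_rfl
      (isUnbounded_closedSmallSubsets hμ hμω hkap hkl.le)
  · exact isStationaryPk_of_isUnbounded hclub hTS hT

/-- If `λ = ℵ_ω`, `κ = (2^ℵ₀)⁺ < λ` and `2^λ = λ^ℵ₀`, then there is a
stationary subset of `[λ]^{<κ}` all of whose unbounded subsets are
stationary. -/
theorem exists_stationary_all_unbounded_subsets_stationary_alephOmega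
    (lam kap : Cardinal.{0})
    (hlam : lam = Cardinal.aleph Ordinal.omega0)
    (hkap : kap = Order.succ (2 ^ ℵ₀))
    (hkl : kap < lam)
    (harith : 2 ^ lam = lam ^ ℵ₀) :
    ∃ S ⊆ smallSubsets lam kap, IsStationaryPk lam kap S ∧
      ∀ T ⊆ S, IsUnbounded lam kap T → IsStationaryPk lam kap T :=
  exists_stationary_all_unbounded_subsets_stationary_alephOmega_general lam kap hkap hkl harith
end
end

section
/- Let κ be a regular uncountable cardinal and λ ≥ κ with λ^{<κ} = λ. Then every stationary subset S of [λ]^{<κ} contains an unbounded subset which is not stationary. -/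
open Cardinal Set

noncomputable section

/-!
A stationary set is unbounded: a member of a club that contains some `γ < κ` contains all
of `γ` (its trace on `κ` is an ordinal), so if it is also closed under a map of `γ` onto
`b`, it contains `b`. Since `|[λ]^{<κ}| ≤ λ^{<κ} = λ`, every `b ∈ [λ]^{<κ}` has a code
`ι b < λ` with `ι` injective; choose `A b ∈ S` containing `b ∪ {ι b}`, so `T = {A b}` is
unbounded. Choosing `f (ι b) ∉ A b`, the club of sets closed under `f` misses every
`A b`, so `T` is not stationary.
-/

open Function

namespace FinFun

def const (x : Ordinal.{0}) : FinFun := ⟨0, fun _ => x⟩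

def unary (g : Ordinal.{0} → Ordinal.{0}) : FinFun := ⟨1, fun v => g (v 0)⟩

end FinFun

section

variable {lam kap : Cardinal.{0}} {F : Set FinFun} {a b : Set Ordinal.{0}} {x y γ : Ordinal.{0}}
  {g : Ordinal.{0} → Ordinal.{0}}

lemma famOn_unary (hg : MapsTo g (Iio lam.ord) (Iio lam.ord)) : FamOn lam {FinFun.unary g} := by
  rintro f rfl v hv
  exact hg (hv _)

lemma FamOn.insert_const (hF : FamOn lam F) (hx : x < lam.ord) :
    FamOn lam (insert (FinFun.const x) F) := by
  rintro f (rfl | hf) v hv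
  · exact hx
  · exact hF f hf v hv

lemma const_mem_of_mem_clubOf (ha : a ∈ clubOf lam kap F) (hx : FinFun.const x ∈ F) : x ∈ a :=
  ha.2.1 _ hx Fin.elim0 fun i => i.elim0

lemma apply_mem_of_mem_clubOf (ha : a ∈ clubOf lam kap F) (hg : FinFun.unary g ∈ F)
    (hy : y ∈ a) : g y ∈ a :=
  ha.2.1 _ hg (fun _ => y) fun _ => hy

lemma mem_of_lt_of_mem_clubOf (ha : a ∈ clubOf lam kap F) (hγ : γ ∈ a) (hγk : γ < kap.ord)
    (hy : y < γ) : y ∈ a := by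
  obtain ⟨β, -, hseg⟩ := ha.2.2
  have hγβ : γ < β := by
    rw [← mem_Iio, ← hseg]
    exact ⟨hγ, hγk⟩
  have hyβ : y ∈ a ∩ Iio kap.ord := by
    rw [hseg]
    exact hy.trans hγβ
  exact hyβ.1

lemma exists_subset_image_Iio_of_mem_smallSubsets (hb : b ∈ smallSubsets lam kap) :
    ∃ γ < kap.ord, ∃ g : Ordinal.{0} → Ordinal.{0},
      MapsTo g (Iio lam.ord) (Iio lam.ord) ∧ b ⊆ g '' Iio γ := by
  obtain ⟨c, hck, hc⟩ := lt_lift_iff.1 hb.2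
  obtain ⟨e⟩ : Nonempty (Iio c.ord ≃ b) := by
    rw [← Cardinal.eq, mk_Iio_ordinal, card_ord, hc]
  classical
  refine ⟨c.ord, ord_lt_ord.2 hck, fun y => if h : y < c.ord then e ⟨y, h⟩ else y, ?_, ?_⟩
  · intro y hy
    dsimp only
    split_ifs
    · exact hb.1 _ (e _).2
    · exact hy
  · intro y hy
    have hlt : (e.symm ⟨y, hy⟩ : Ordinal) < c.ord := (e.symm ⟨y, hy⟩).2
    refine ⟨_, hlt, ?_⟩
    simp only [dif_pos hlt]
    exact congrArg Subtype.val (e.apply_symm_apply ⟨y, hy⟩)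

theorem IsStationaryPk.isUnbounded (hkl : kap ≤ lam) {S : Set (Set Ordinal.{0})}
    (hS : IsStationaryPk lam kap S) : IsUnbounded lam kap S := by
  intro b hb
  obtain ⟨γ, hγ, g, hg, hbg⟩ := exists_subset_image_Iio_of_mem_smallSubsets hb
  let F : Set FinFun := {FinFun.const γ, FinFun.unary g}
  have hF : FamOn lam F := (famOn_unary hg).insert_const (hγ.trans_le (ord_le_ord.2 hkl))
  obtain ⟨a, haS, ha⟩ := hS _ ⟨F, F.toFinite.countable, hF, rfl⟩
  have hγa : γ ∈ a := const_mem_of_mem_clubOf ha (mem_insert _ _)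
  refine ⟨a, haS, hbg.trans ?_⟩
  rintro _ ⟨y, hy, rfl⟩
  exact apply_mem_of_mem_clubOf ha (mem_insert_of_mem _ rfl)
    (mem_of_lt_of_mem_clubOf ha hγa hγ hy)

lemma insert_mem_smallSubsets (hkap : ℵ₀ ≤ kap) (hx : x < lam.ord)
    (hb : b ∈ smallSubsets lam kap) : insert x b ∈ smallSubsets lam kap :=
  ⟨forall_mem_insert.2 ⟨hx, hb.1⟩,
    mk_insert_le.trans_lt (add_one_lt_of_lt (aleph0_le_lift.2 hkap) hb.2)⟩

lemma exists_lt_ord_notMem_of_mem_smallSubsets (hkl : kap ≤ lam)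
    (ha : a ∈ smallSubsets lam kap) : ∃ x < lam.ord, x ∉ a := by
  by_contra! h
  have hle := mk_le_mk_of_subset (show Iio lam.ord ⊆ a from h)
  rw [mk_Iio_ordinal, card_ord] at hle
  exact (hle.trans_lt ha.2).not_ge (lift_le.2 hkl)

theorem not_isStationaryPk_range {ι : Type*} (hkl : kap ≤ lam) (A : ι → Set Ordinal.{0})
    (hA : ∀ i, A i ∈ smallSubsets lam kap) (code : ι → Ordinal.{0}) (hcode : Injective code)
    (hcode_mem : ∀ i, code i ∈ A i) : ¬ IsStationaryPk lam kap (range A) := by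
  choose x hx_lt hx_notMem using fun i => exists_lt_ord_notMem_of_mem_smallSubsets hkl (hA i)
  have hf : MapsTo (extend code x id) (Iio lam.ord) (Iio lam.ord) := by
    intro y hy
    by_cases h : ∃ i, code i = y
    · obtain ⟨i, rfl⟩ := h
      rw [hcode.extend_apply]
      exact hx_lt i
    · rwa [extend_apply' _ _ _ h]
  intro hS
  obtain ⟨_, ⟨i, rfl⟩, ha⟩ :=
    hS _ ⟨{FinFun.unary (extend code x id)}, countable_singleton _, famOn_unary hf, rfl⟩
  have hmem := apply_mem_of_mem_clubOf ha rfl (hcode_mem i)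
  rw [hcode.extend_apply] at hmem
  exact hx_notMem i hmem

lemma mk_smallSubsets_le (hlam : ℵ₀ ≤ lam) (hkl : kap ≤ lam) (hpow : lam ^< kap = lam) :
    #(smallSubsets lam kap) ≤ lift.{1} lam := by
  have hlam' : ℵ₀ ≤ lift.{1} lam := aleph0_le_lift.2 hlam
  let A : Iio kap.ord → Set (Set Ordinal.{0}) := fun i =>
    {t | t ⊆ Iio lam.ord ∧ #t ≤ lift.{1} (i : Ordinal).card}
  have hsub : smallSubsets lam kap ⊆ ⋃ i, A i := by
    rintro t ⟨ht, htk⟩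
    obtain ⟨c, hck, hc⟩ := lt_lift_iff.1 htk
    refine mem_iUnion.2 ⟨⟨c.ord, ord_lt_ord.2 hck⟩, ht, ?_⟩
    rw [card_ord, hc]
  have hA : ∀ i, #(A i) ≤ lift.{1} lam := fun i =>
    calc #(A i) ≤ max #(Iio lam.ord) ℵ₀ ^ lift.{1} (i : Ordinal).card :=
          mk_bounded_subset_le _ _
      _ = lift.{1} (lam ^ (i : Ordinal).card) := by
          rw [mk_Iio_ordinal, card_ord, max_eq_left hlam', lift_power]
      _ ≤ lift.{1} (lam ^< kap) := lift_le.2 (le_powerlt lam (lt_ord.1 i.2))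
      _ = lift.{1} lam := by rw [hpow]
  calc #(smallSubsets lam kap) ≤ #(⋃ i, A i) := mk_le_mk_of_subset hsub
    _ ≤ #(Iio kap.ord) * ⨆ i, #(A i) := mk_iUnion_le A
    _ ≤ lift.{1} lam * lift.{1} lam := by
        refine mul_le_mul' ?_ (ciSup_le' hA)
        rw [mk_Iio_ordinal, card_ord]
        exact lift_le.2 hkl
    _ = lift.{1} lam := mul_eq_self hlam'

end

theorem stationary_contains_unbounded_nonstationary_of_powerlt_general
    (lam kap : Cardinal.{0}) (hunc : ℵ₀ < kap)
    (hkl : kap ≤ lam) (hpow : lam ^< kap = lam) :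
    ∀ S ⊆ smallSubsets lam kap, IsStationaryPk lam kap S →
      ∃ T ⊆ S, IsUnbounded lam kap T ∧ ¬ IsStationaryPk lam kap T := by
  intro S hSsub hS
  obtain ⟨code⟩ : Nonempty (smallSubsets lam kap ↪ Iio lam.ord) := by
    rw [← Cardinal.le_def, mk_Iio_ordinal, card_ord]
    exact mk_smallSubsets_le (hunc.le.trans hkl) hkl hpow
  choose A hAS hA using fun b : smallSubsets lam kap =>
    hS.isUnbounded hkl _ (insert_mem_smallSubsets hunc.le (code b).2 b.2)
  refine ⟨range A, range_subset_iff.2 hAS, ?_, ?_⟩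
  · exact fun b hb => ⟨A ⟨b, hb⟩, mem_range_self _, (subset_insert _ b).trans (hA ⟨b, hb⟩)⟩
  · exact not_isStationaryPk_range hkl A (fun b => hSsub (hAS b)) (fun b => code b)
      (Subtype.val_injective.comp code.injective) fun b => hA b (mem_insert _ _)

/-- If `κ` is regular uncountable, `λ ≥ κ` and `λ^{<κ} = λ`, then every
stationary subset of `[λ]^{<κ}` contains an unbounded subset which is not
stationary. -/
theorem stationary_contains_unbounded_nonstationary_of_powerlt
    (lam kap : Cardinal.{0}) (hreg : kap.IsRegular) (hunc : ℵ₀ < kap)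
    (hkl : kap ≤ lam) (hpow : lam ^< kap = lam) :
    ∀ S ⊆ smallSubsets lam kap, IsStationaryPk lam kap S →
      ∃ T ⊆ S, IsUnbounded lam kap T ∧ ¬ IsStationaryPk lam kap T :=
  stationary_contains_unbounded_nonstationary_of_powerlt_general lam kap hunc hkl hpow
end
end

section
/- Suppose κ is a regular uncountable cardinal, λ ≥ κ, cf(λ) < κ, and ⟨(α_β, C_β) : β < λ⟩ is a sequence such that: (a) for each β < λ, α_β is an ordinal with κ ≤ α_β ≤ κ + β < λ; (b) C_β is a club of [α_β]^{<κ}; (c) for every ordinal α with κ ≤ α < λ and every club C of [α]^{<κ}, there exists β < λ with α_β = α and C_β ⊆ C. Then the set C* = { a ∈ [λ]^{<κ} : for every β ∈ a, a ∩ α_β ∈ C_β } is a club of [λ]^{<κ} and every unbounded subset of C* is stationary. -/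
open Cardinal Set

noncomputable section

/-- `[A]^{<κ}` for an ordinal `A`: the collection of subsets of the set of
ordinals `< A` of cardinality `< κ`. -/
def smallSubsetsO (A : Ordinal.{0}) (kap : Cardinal.{0}) : Set (Set Ordinal.{0}) :=
  {a | (∀ x ∈ a, x < A) ∧ Cardinal.mk ↥a < Cardinal.lift.{1} kap}

/-- The family `F` consists of finitary functions *on `A`*. -/
def FamOnO (A : Ordinal.{0}) (F : Set FinFun) : Prop :=
  ∀ f ∈ F, ∀ x : Fin f.1 → Ordinal.{0}, (∀ i, x i < A) → f.2 x < A

/-- The club `C_F` of `[A]^{<κ}` associated to a family `F` of finitary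
functions on `A`: the members `a` of `[A]^{<κ}` closed under every function
of `F` and such that `a ∩ κ` is an ordinal (an initial segment of `κ`). -/
def clubOfO (A : Ordinal.{0}) (kap : Cardinal.{0}) (F : Set FinFun) :
    Set (Set Ordinal.{0}) :=
  {a | a ∈ smallSubsetsO A kap ∧
    (∀ f ∈ F, ∀ x : Fin f.1 → Ordinal.{0}, (∀ i, x i ∈ a) → f.2 x ∈ a) ∧
    ∃ β < kap.ord, a ∩ Set.Iio kap.ord = Set.Iio β}

/-- `C` is a club of `[A]^{<κ}`. -/
def IsClubO (A : Ordinal.{0}) (kap : Cardinal.{0}) (C : Set (Set Ordinal.{0})) : Prop :=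
  ∃ F : Set FinFun, F.Countable ∧ FamOnO A F ∧ C = clubOfO A kap F

/-- `S` is a stationary subset of `[A]^{<κ}`: it meets every club. -/
def IsStationaryO (A : Ordinal.{0}) (kap : Cardinal.{0}) (S : Set (Set Ordinal.{0})) : Prop :=
  ∀ C, IsClubO A kap C → (S ∩ C).Nonempty

/-- `S` is an unbounded subset of `[A]^{<κ}`: every member of `[A]^{<κ}`
is contained in some member of `S`. -/
def IsUnboundedO (A : Ordinal.{0}) (kap : Cardinal.{0}) (S : Set (Set Ordinal.{0})) : Prop :=
  ∀ b ∈ smallSubsetsO A kap, ∃ a ∈ S, b ⊆ a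

/-!
`C*` is itself a club: enumerate, for each `β`, countably many functions generating `C_β`, and
let `g_{n,m}(β, x₁, …, x_m)` apply the `n`-th generator of `C_β` to `x₁, …, x_m`. Closure of `a`
under the countably many `g_{n,m}` says exactly that every `a ∩ α_β` with `β ∈ a` is closed under
the generators of `C_β`.

For stationarity, let `U ⊆ C*` be unbounded and `C_F` a club of `[λ]^{<κ}`. Take `T` cofinal in
`λ` of size `cf λ < κ` and, by (c), for each `t ∈ T` some `β_t` with `α_{β_t} = κ ∪ t` and
`C_{β_t}` inside the club generated by the restrictions of `F` to `κ ∪ t`. Some `a ∈ U` contains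
the small set `{β_t : t ∈ T}`, so each `a ∩ (κ ∪ t)` is closed under `F` restricted to `κ ∪ t`;
as these ordinals are cofinal in `λ`, `a` is closed under `F`.
-/

def ClosedUnder (a : Set Ordinal.{0}) (F : Set FinFun) : Prop :=
  ∀ f ∈ F, ∀ x : Fin f.1 → Ordinal.{0}, (∀ i, x i ∈ a) → f.2 x ∈ a

theorem mem_clubOfO {A : Ordinal.{0}} {kap : Cardinal.{0}} {F : Set FinFun}
    {a : Set Ordinal.{0}} :
    a ∈ clubOfO A kap F ↔
      a ∈ smallSubsetsO A kap ∧ ClosedUnder a F ∧ ∃ β < kap.ord, a ∩ Iio kap.ord = Iio β :=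
  Iff.rfl

abbrev idFinFun : FinFun := ⟨1, fun x => x 0⟩

theorem closedUnder_insert_idFinFun {a : Set Ordinal.{0}} {F : Set FinFun} :
    ClosedUnder a (insert idFinFun F) ↔ ClosedUnder a F := by
  refine ⟨fun h f hf => h f (mem_insert_of_mem _ hf), fun h f hf => ?_⟩
  rcases mem_insert_iff.1 hf with rfl | hf
  · exact fun x hx => hx 0
  · exact h f hf

theorem IsClubO.exists_eq_range {A : Ordinal.{0}} {kap : Cardinal.{0}}
    {C : Set (Set Ordinal.{0})} (hC : IsClubO A kap C) :
    ∃ e : ℕ → FinFun, FamOnO A (range e) ∧ C = clubOfO A kap (range e) := by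
  obtain ⟨F, hFc, hFA, rfl⟩ := hC
  obtain ⟨e, he⟩ := (hFc.insert idFinFun).exists_eq_range (insert_nonempty _ _)
  refine ⟨e, he ▸ ?_, ?_⟩
  · intro f hf
    rcases mem_insert_iff.1 hf with rfl | hf
    · exact fun x hx => hx 0
    · exact hFA f hf
  · ext a
    simp only [mem_clubOfO, ← he, closedUnder_insert_idFinFun]

theorem inter_Iio_inter_Iio_of_le {α : Type*} [LinearOrder α] {a : Set α} {x y : α}
    (h : y ≤ x) : a ∩ Iio x ∩ Iio y = a ∩ Iio y := by
  rw [inter_assoc, Iio_inter_Iio, inf_eq_right.2 h]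

theorem inter_Iio_mem_smallSubsetsO {A α : Ordinal.{0}} {kap : Cardinal.{0}}
    {a : Set Ordinal.{0}} (ha : a ∈ smallSubsetsO A kap) : a ∩ Iio α ∈ smallSubsetsO α kap :=
  ⟨fun _ hx => hx.2, (mk_le_mk_of_subset inter_subset_left).trans_lt ha.2⟩

theorem exists_eq_Iio_of_inter_Iio_mem_clubOfO {α : Ordinal.{0}} {kap : Cardinal.{0}}
    {F : Set FinFun} {a : Set Ordinal.{0}} (hα : kap.ord ≤ α)
    (ha : a ∩ Iio α ∈ clubOfO α kap F) : ∃ β < kap.ord, a ∩ Iio kap.ord = Iio β := by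
  obtain ⟨-, -, β, hβ, hseg⟩ := ha
  refine ⟨β, hβ, ?_⟩
  rwa [inter_Iio_inter_Iio_of_le hα] at hseg

def diagInter (L : Ordinal.{0}) (kap : Cardinal.{0}) (alph : Ordinal.{0} → Ordinal.{0})
    (Cb : Ordinal.{0} → Set (Set Ordinal.{0})) : Set (Set Ordinal.{0}) :=
  {a | a ∈ smallSubsetsO L kap ∧ ∀ β ∈ a, a ∩ Iio (alph β) ∈ Cb β}

-- Where `e β n` does not apply to `y`, the value is `β`, an argument of the function itself.
open scoped Classical in
def codingValue (L : Ordinal.{0}) (alph : Ordinal.{0} → Ordinal.{0})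
    (e : Ordinal.{0} → ℕ → FinFun) (n m : ℕ) (β : Ordinal.{0}) (y : Fin m → Ordinal.{0}) :
    Ordinal.{0} :=
  if h : β < L ∧ (e β n).1 = m ∧ ∀ i, y i < alph β then (e β n).2 (y ∘ Fin.cast h.2.1) else β

abbrev codingFun (L : Ordinal.{0}) (alph : Ordinal.{0} → Ordinal.{0})
    (e : Ordinal.{0} → ℕ → FinFun) (n m : ℕ) : FinFun :=
  ⟨m + 1, fun x => codingValue L alph e n m (x 0) (Fin.tail x)⟩

def codingFamily (L : Ordinal.{0}) (alph : Ordinal.{0} → Ordinal.{0})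
    (e : Ordinal.{0} → ℕ → FinFun) : Set FinFun :=
  range fun p : ℕ × ℕ => codingFun L alph e p.1 p.2

section Coding

variable {L : Ordinal.{0}} {alph : Ordinal.{0} → Ordinal.{0}} {e : Ordinal.{0} → ℕ → FinFun}

theorem famOnO_codingFamily (hα : ∀ β < L, alph β ≤ L)
    (he : ∀ β < L, FamOnO (alph β) (range (e β))) : FamOnO L (codingFamily L alph e) := by
  rintro _ ⟨⟨n, m⟩, rfl⟩ x hx
  dsimp only [codingFun, codingValue]
  split_ifs with h
  · exact (he _ h.1 _ (mem_range_self n) _ fun i => h.2.2 _).trans_le (hα _ h.1)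
  · exact hx 0

theorem codingFun_cons {β : Ordinal.{0}} {n : ℕ} {x : Fin (e β n).1 → Ordinal.{0}}
    (hβ : β < L) (hx : ∀ i, x i < alph β) :
    (codingFun L alph e n (e β n).1).2 (Fin.cons β x) = (e β n).2 x := by
  simp only [codingFun, Fin.cons_zero, Fin.tail_cons]
  rw [codingValue, dif_pos ⟨hβ, rfl, hx⟩]
  rfl

theorem closedUnder_codingFamily_iff {a : Set Ordinal.{0}} (haL : ∀ β ∈ a, β < L)
    (he : ∀ β < L, FamOnO (alph β) (range (e β))) :
    ClosedUnder a (codingFamily L alph e) ↔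
      ∀ β ∈ a, ClosedUnder (a ∩ Iio (alph β)) (range (e β)) := by
  constructor
  · rintro hcl β hβ _ ⟨n, rfl⟩ x hx
    refine ⟨?_, he β (haL β hβ) _ (mem_range_self n) x fun i => (hx i).2⟩
    rw [← codingFun_cons (haL β hβ) fun i => (hx i).2]
    exact hcl _ ⟨(n, (e β n).1), rfl⟩ _ (Fin.cases hβ fun i => by simpa using (hx i).1)
  · rintro hcl _ ⟨⟨n, m⟩, rfl⟩ x hx
    dsimp only [codingFun, codingValue]
    split_ifs with h
    · exact (hcl _ (hx 0) _ (mem_range_self n) _ fun i => ⟨hx _, h.2.2 _⟩).1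
    · exact hx 0

end Coding

theorem isClubO_diagInter {L : Ordinal.{0}} {kap : Cardinal.{0}}
    {alph : Ordinal.{0} → Ordinal.{0}} {Cb : Ordinal.{0} → Set (Set Ordinal.{0})}
    (hk : 0 < kap.ord) (hα : ∀ β < L, kap.ord ≤ alph β ∧ alph β ≤ L)
    (hC : ∀ β < L, IsClubO (alph β) kap (Cb β)) : IsClubO L kap (diagInter L kap alph Cb) := by
  choose! e he using fun β hβ => (hC β hβ).exists_eq_range
  have hfam β hβ : FamOnO (alph β) (range (e β)) := (he β hβ).1
  refine ⟨codingFamily L alph e, countable_range _,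
    famOnO_codingFamily (fun β hβ => (hα β hβ).2) hfam, ?_⟩
  ext a
  constructor
  · rintro ⟨hsmall, hmem⟩
    have hmem' β (hβ : β ∈ a) : a ∩ Iio (alph β) ∈ clubOfO (alph β) kap (range (e β)) :=
      (he β (hsmall.1 β hβ)).2 ▸ hmem β hβ
    refine ⟨hsmall, (closedUnder_codingFamily_iff hsmall.1 hfam).2 fun β hβ => (hmem' β hβ).2.1,
      ?_⟩
    rcases a.eq_empty_or_nonempty with rfl | ⟨β, hβ⟩
    · exact ⟨0, hk, by simp⟩
    · exact exists_eq_Iio_of_inter_Iio_mem_clubOfO (hα β (hsmall.1 β hβ)).1 (hmem' β hβ)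
  · rintro ⟨hsmall, hcl, β₀, hβ₀, hseg⟩
    refine ⟨hsmall, fun β hβ => ?_⟩
    have hβL := hsmall.1 β hβ
    rw [(he β hβL).2]
    refine ⟨inter_Iio_mem_smallSubsetsO hsmall,
      (closedUnder_codingFamily_iff hsmall.1 hfam).1 hcl β hβ, β₀, hβ₀, ?_⟩
    rwa [inter_Iio_inter_Iio_of_le (hα β hβL).1]

open scoped Classical in
def restrictFun (s : Ordinal.{0}) (f : FinFun) : FinFun :=
  ⟨f.1, fun x => if f.2 x < s then f.2 x else 0⟩

theorem famOnO_image_restrictFun {s : Ordinal.{0}} (hs : 0 < s) (F : Set FinFun) :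
    FamOnO s (restrictFun s '' F) := by
  rintro _ ⟨f, -, rfl⟩ x -
  dsimp only [restrictFun]
  split_ifs with h
  exacts [h, hs]

theorem closedUnder_of_closedUnder_restrictFun {L : Ordinal.{0}} {F : Set FinFun}
    {a S : Set Ordinal.{0}} (hF : FamOnO L F) (haL : ∀ x ∈ a, x < L)
    (hS : ∀ γ < L, ∃ s ∈ S, γ < s) (h : ∀ s ∈ S, ClosedUnder (a ∩ Iio s) (restrictFun s '' F)) :
    ClosedUnder a F := by
  intro f hf x hx
  have hfx : f.2 x < L := hF f hf x fun i => haL _ (hx i)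
  have hγ : Finset.univ.sup x ⊔ f.2 x < L :=
    sup_lt_iff.2 ⟨(Finset.sup_lt_iff (bot_le.trans_lt hfx)).2 fun i _ => haL _ (hx i), hfx⟩
  obtain ⟨s, hs, hγs⟩ := hS _ hγ
  have hxs i : x i < s := (Finset.le_sup (Finset.mem_univ i)).trans_lt (le_sup_left.trans_lt hγs)
  have hfxs : f.2 x < s := le_sup_right.trans_lt hγs
  have := h s hs _ ⟨f, hf, rfl⟩ x fun i => ⟨hx i, hxs i⟩
  simp only [restrictFun, if_pos hfxs] at this
  exact this.1

theorem Ordinal.exists_unbounded_mk_le_lift_cof {L : Ordinal.{u}} (hL : Order.IsSuccLimit L) :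
    ∃ T : Set Ordinal.{u}, (∀ t ∈ T, t < L) ∧ (∀ γ < L, ∃ t ∈ T, γ < t) ∧
      #T ≤ Cardinal.lift.{u + 1} L.cof := by
  obtain ⟨s, hs, hcard⟩ := Order.exists_cof_eq (Iio L)
  refine ⟨Subtype.val '' s, ?_, fun γ hγ => ?_, ?_⟩
  · rintro _ ⟨t, -, rfl⟩
    exact t.2
  · obtain ⟨t, ht, hle⟩ := hs ⟨Order.succ γ, hL.succ_lt hγ⟩
    exact ⟨t, ⟨t, ht, rfl⟩, (Order.lt_succ γ).trans_le hle⟩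
  · calc #(Subtype.val '' s) ≤ #s := mk_image_le
      _ = Order.cof (Iio L) := hcard
      _ = _ := by rw [Ordinal.cof_Iio, ← Ordinal.lift_cof]

theorem IsUnboundedO.isStationaryO_of_subset_diagInter {L : Ordinal.{0}} {kap : Cardinal.{0}}
    {alph : Ordinal.{0} → Ordinal.{0}} {Cb : Ordinal.{0} → Set (Set Ordinal.{0})}
    {U : Set (Set Ordinal.{0})} (hUnb : IsUnboundedO L kap U) (hU : U ⊆ diagInter L kap alph Cb)
    (hL : Order.IsSuccLimit L) (hcof : L.cof < kap) (hkL : kap.ord < L)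
    (hc : ∀ α, kap.ord ≤ α → α < L → ∀ C, IsClubO α kap C → ∃ β < L, alph β = α ∧ Cb β ⊆ C) :
    IsStationaryO L kap U := by
  rintro _ ⟨F, hFc, hF, rfl⟩
  obtain ⟨T, hTL, hT, hTcard⟩ := Ordinal.exists_unbounded_mk_le_lift_cof hL
  set s : Ordinal.{0} → Ordinal.{0} := fun t => kap.ord ⊔ t
  have hs t (ht : t ∈ T) : kap.ord ≤ s t ∧ s t < L := ⟨le_sup_left, sup_lt_iff.2 ⟨hkL, hTL t ht⟩⟩
  have hk : 0 < kap.ord := Cardinal.ord_pos.2 (pos_of_gt hcof)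
  choose! β hβL hαβ hCβ using fun t ht => hc (s t) (hs t ht).1 (hs t ht).2 _
    ⟨_, hFc.image (restrictFun (s t)), famOnO_image_restrictFun (hk.trans_le (hs t ht).1) F, rfl⟩
  have hb : β '' T ∈ smallSubsetsO L kap := by
    refine ⟨?_, mk_image_le.trans_lt (hTcard.trans_lt (lift_lt.2 hcof))⟩
    rintro _ ⟨t, ht, rfl⟩
    exact hβL t ht
  obtain ⟨a, haU, hba⟩ := hUnb _ hb
  obtain ⟨hasmall, hadiag⟩ := hU haU
  have hamem t (ht : t ∈ T) : a ∩ Iio (s t) ∈ clubOfO (s t) kap (restrictFun (s t) '' F) := by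
    have := hadiag (β t) (hba ⟨t, ht, rfl⟩)
    rw [hαβ t ht] at this
    exact hCβ t ht this
  obtain ⟨t, ht, -⟩ := hT 0 (pos_of_gt hkL)
  refine ⟨a, haU, hasmall, closedUnder_of_closedUnder_restrictFun (S := s '' T) hF hasmall.1 ?_ ?_,
    exists_eq_Iio_of_inter_Iio_mem_clubOfO (hs t ht).1 (hamem t ht)⟩
  · intro γ hγ
    obtain ⟨t, ht, hγt⟩ := hT γ hγ
    exact ⟨s t, ⟨t, ht, rfl⟩, hγt.trans_le le_sup_right⟩
  · rintro _ ⟨t, ht, rfl⟩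
    exact (hamem t ht).2.1

theorem cstar_club_and_all_unbounded_subsets_stationary_general
    (lam kap : Cardinal.{0}) (hreg : kap.IsRegular)
    (hkl : kap ≤ lam) (hcof : lam.ord.cof < kap)
    (alph : Ordinal.{0} → Ordinal.{0}) (Cb : Ordinal.{0} → Set (Set Ordinal.{0}))
    (ha : ∀ β < lam.ord,
      kap.ord ≤ alph β ∧ alph β ≤ kap.ord + β ∧ kap.ord + β < lam.ord)
    (hb : ∀ β < lam.ord, IsClubO (alph β) kap (Cb β))
    (hc : ∀ α : Ordinal.{0}, kap.ord ≤ α → α < lam.ord →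
      ∀ C, IsClubO α kap C → ∃ β < lam.ord, alph β = α ∧ Cb β ⊆ C) :
    IsClubO lam.ord kap
      {a | a ∈ smallSubsetsO lam.ord kap ∧
        ∀ β ∈ a, a ∩ Set.Iio (alph β) ∈ Cb β} ∧
    ∀ U ⊆ {a | a ∈ smallSubsetsO lam.ord kap ∧
        ∀ β ∈ a, a ∩ Set.Iio (alph β) ∈ Cb β},
      IsUnboundedO lam.ord kap U → IsStationaryO lam.ord kap U := by
  have hlt : kap < lam := hkl.lt_of_ne <| by
    rintro rfl
    exact hcof.ne hreg.cof_ord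
  have hα β (hβ : β < lam.ord) : kap.ord ≤ alph β ∧ alph β ≤ lam.ord :=
    ⟨(ha β hβ).1, ((ha β hβ).2.1.trans_lt (ha β hβ).2.2).le⟩
  refine ⟨isClubO_diagInter hreg.ord_pos hα hb, fun U hU hUnb => ?_⟩
  exact hUnb.isStationaryO_of_subset_diagInter hU (isSuccLimit_ord (hreg.aleph0_le.trans hkl))
    hcof (ord_lt_ord.2 hlt) hc

/-- Suppose `κ` is regular uncountable, `λ ≥ κ`, `cf(λ) < κ`, and
`⟨(α_β, C_β) : β < λ⟩` satisfies (a) `κ ≤ α_β ≤ κ + β < λ`, (b) `C_β` is a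
club of `[α_β]^{<κ}`, and (c) every club of `[α]^{<κ}` (for `κ ≤ α < λ`)
contains some `C_β` with `α_β = α`.  Then
`C* = { a ∈ [λ]^{<κ} : ∀ β ∈ a, a ∩ α_β ∈ C_β }` is a club of `[λ]^{<κ}`
and every unbounded subset of `C*` is stationary. -/
theorem cstar_club_and_all_unbounded_subsets_stationary
    (lam kap : Cardinal.{0}) (hreg : kap.IsRegular) (hunc : ℵ₀ < kap)
    (hkl : kap ≤ lam) (hcof : lam.ord.cof < kap)
    (alph : Ordinal.{0} → Ordinal.{0}) (Cb : Ordinal.{0} → Set (Set Ordinal.{0}))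
    (ha : ∀ β < lam.ord,
      kap.ord ≤ alph β ∧ alph β ≤ kap.ord + β ∧ kap.ord + β < lam.ord)
    (hb : ∀ β < lam.ord, IsClubO (alph β) kap (Cb β))
    (hc : ∀ α : Ordinal.{0}, kap.ord ≤ α → α < lam.ord →
      ∀ C, IsClubO α kap C → ∃ β < lam.ord, alph β = α ∧ Cb β ⊆ C) :
    IsClubO lam.ord kap
      {a | a ∈ smallSubsetsO lam.ord kap ∧
        ∀ β ∈ a, a ∩ Set.Iio (alph β) ∈ Cb β} ∧
    ∀ U ⊆ {a | a ∈ smallSubsetsO lam.ord kap ∧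
        ∀ β ∈ a, a ∩ Set.Iio (alph β) ∈ Cb β},
      IsUnboundedO lam.ord kap U → IsStationaryO lam.ord kap U :=
  cstar_club_and_all_unbounded_subsets_stationary_general lam kap hreg hkl hcof alph Cb ha hb hc
end
end
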